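/- For n ≥ 5, every n-dimensional complex filiform Zinbiel algebra admits a basis e_1, …, e_n in which the multiplication has the form: e_i∘e_j = C(i+j−1, j)·e_{i+j} for 2 ≤ i+j ≤ n−1, e_n∘e_1 = α·e_{n−1}, and e_n∘e_n = β·e_{n−1} for some complex numbers α and β, with all other products of basis vectors equal to zero. -/

import Mathlib

/-- A bilinear multiplication `mul` is a *Zinbiel* multiplication if it satisfies
`(x∘y)∘z = x∘(y∘z) + x∘(z∘y)`. -/
def IsZinbiel {K A : Type*} [CommRing K] [AddCommGroup A] [Module K A]
    (mul : A →ₗ[K] A →ₗ[K] A) : Prop :=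
  ∀ x y z : A, mul (mul x y) z = mul x (mul y z) + mul x (mul z y)

/-- The descending series of a (Zinbiel) algebra: `zpow mul i` is `A^i`,
with `A^1 = A` and `A^{k+1} = A ∘ A^k` (we also set `A^0 = A` for convenience). -/
def zpow {K A : Type*} [CommRing K] [AddCommGroup A] [Module K A]
    (mul : A →ₗ[K] A →ₗ[K] A) : ℕ → Submodule K A
  | 0 => ⊤
  | 1 => ⊤
  | (k+2) => Submodule.span K {z | ∃ a : A, ∃ b ∈ zpow mul (k+1), z = mul a b}

/-- The bilinear multiplication on `Fin n → ℂ` determined by structure constants `c`: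
`e_i ∘ e_j = ∑ k, c i j k • e_k`. -/
noncomputable def mulOf (n : ℕ) (c : Fin n → Fin n → Fin n → ℂ) :
    (Fin n → ℂ) →ₗ[ℂ] (Fin n → ℂ) →ₗ[ℂ] (Fin n → ℂ) :=
  LinearMap.mk₂ ℂ (fun x y k => ∑ i, ∑ j, x i * y j * c i j k)
    (fun x x' y => by
      funext k
      simp [add_mul, Finset.sum_add_distrib])
    (fun a x y => by
      funext k
      simp [Finset.mul_sum, mul_assoc])
    (fun x y y' => by
      funext k
      simp [mul_add, add_mul, Finset.sum_add_distrib])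
    (fun a x y => by
      funext k
      simp [Finset.mul_sum, mul_assoc, mul_left_comm])

/-- Two bilinear multiplications give isomorphic algebras if there is a linear
equivalence intertwining them. -/
def Isom {A B : Type*} [AddCommGroup A] [Module ℂ A] [AddCommGroup B] [Module ℂ B]
    (mulA : A →ₗ[ℂ] A →ₗ[ℂ] A) (mulB : B →ₗ[ℂ] B →ₗ[ℂ] B) : Prop :=
  ∃ f : A ≃ₗ[ℂ] B, ∀ x y : A, f (mulA x y) = mulB (f x) (f y)

/-- Structure constants of the nul-filiform algebra `NF_n`:
`e_i ∘ e_j = C(i+j-1, j) e_{i+j}` for `2 ≤ i+j ≤ n` (1-indexed). -/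
noncomputable def NFc (n : ℕ) : Fin n → Fin n → Fin n → ℂ := fun i j k =>
  if (i : ℕ) + j + 1 = (k : ℕ) then (((i : ℕ) + j + 1).choose ((j : ℕ) + 1) : ℂ) else 0

/-- The nul-filiform Zinbiel algebra `NF_n` (as a multiplication on `Fin n → ℂ`). -/
noncomputable def NFmul (n : ℕ) : (Fin n → ℂ) →ₗ[ℂ] (Fin n → ℂ) →ₗ[ℂ] (Fin n → ℂ) :=
  mulOf n (NFc n)

section Aux
variable {A : Type*} [AddCommGroup A] [Module ℂ A]
variable (mul : A →ₗ[ℂ] A →ₗ[ℂ] A)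

lemma mem_zpow_mul {j : ℕ} {b : A} (hb : b ∈ zpow mul (j+1)) (a : A) :
    mul a b ∈ zpow mul (j+2) :=
  Submodule.subset_span ⟨a, b, hb, rfl⟩

lemma mul_mem_zpow_two (a b : A) : mul a b ∈ zpow mul 2 :=
  mem_zpow_mul mul (by trivial) a

lemma zp_succ_le : ∀ k : ℕ, zpow mul (k+1) ≤ zpow mul k
  | 0 => le_of_eq rfl
  | 1 => le_top
  | (k+2) => by
      show zpow mul (k+3) ≤ zpow mul (k+2)
      refine Submodule.span_le.2 ?_
      rintro z ⟨a, b, hb, rfl⟩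
      exact mem_zpow_mul mul (zp_succ_le (k+1) hb) a

lemma zp_le_of_le {i j : ℕ} (h : i ≤ j) : zpow mul j ≤ zpow mul i := by
  induction j with
  | zero => simp_all
  | succ k ih =>
    rcases Nat.lt_or_ge i (k+1) with h' | h'
    · exact le_trans (zp_succ_le mul k) (ih (by omega))
    · have : i = k + 1 := by omega
      subst this; exact le_rfl

variable (hzin : IsZinbiel mul)
include hzin

lemma mul_mem_zpow_aux : ∀ s i j : ℕ, i + j ≤ s → 1 ≤ i → 1 ≤ j →
    ∀ b ∈ zpow mul j, ∀ a ∈ zpow mul i, mul a b ∈ zpow mul (i+j) := by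
  intro s
  induction s with
  | zero => intro i j h h1 h2; omega
  | succ s ih =>
    intro i j hs h1 h2 b hb a ha
    match i, h1 with
    | 1, _ =>
      have h1j : (1 : ℕ) + j = (j - 1) + 2 := by omega
      rw [h1j]
      obtain ⟨j', rfl⟩ : ∃ j', j = j' + 1 := ⟨j - 1, by omega⟩
      simpa using mem_zpow_mul mul hb a
    | (i'+2), _ =>
      have hsub : {z | ∃ c : A, ∃ b' ∈ zpow mul (i'+1), z = mul c b'} ⊆
          {z : A | mul z b ∈ zpow mul (i'+2+j)} := by
        rintro z ⟨c, b', hb', rfl⟩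
        have e : mul (mul c b') b = mul c (mul b' b) + mul c (mul b b') := hzin c b' b
        have m1 : mul b' b ∈ zpow mul (i'+1+j) :=
          ih (i'+1) j (by omega) (by omega) h2 b hb b' hb'
        have m2 : mul b b' ∈ zpow mul (i'+1+j) := by
          have := ih j (i'+1) (by omega) h2 (by omega) b' hb' b hb
          rwa [show j + (i'+1) = i'+1+j by omega] at this
        have key : mul c (mul b' b + mul b b') ∈ zpow mul (i'+2+j) := by
          have : (i' + 2 + j) = (i' + j + 1) + 1 := by omega
          rw [this]
          refine mem_zpow_mul mul ?_ c
          rw [show i' + j + 1 = i' + 1 + j by omega]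
          exact Submodule.add_mem _ m1 m2
        rw [map_add] at key
        simpa [e] using key
      have : a ∈ Submodule.span ℂ {z | ∃ c : A, ∃ b' ∈ zpow mul (i'+1), z = mul c b'} := ha
      refine Submodule.span_induction
        (p := fun z _ => mul z b ∈ zpow mul (i'+2+j)) (fun z hz => hsub hz)
        (by simp) (fun u v _ _ hu hv => by
          simp only [map_add, LinearMap.add_apply]; exact Submodule.add_mem _ hu hv)
        (fun r u _ hu => by
          simp only [map_smul, LinearMap.smul_apply]; exact Submodule.smul_mem _ r hu) this

lemma mul_mem_zpow {i j : ℕ} (h1 : 1 ≤ i) (h2 : 1 ≤ j) {a b : A}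
    (ha : a ∈ zpow mul i) (hb : b ∈ zpow mul j) : mul a b ∈ zpow mul (i+j) :=
  mul_mem_zpow_aux mul hzin (i+j) i j le_rfl h1 h2 b hb a ha

end Aux

section Pw
variable {A : Type*} [AddCommGroup A] [Module ℂ A]
variable (mul : A →ₗ[ℂ] A →ₗ[ℂ] A)

lemma zp_span_le {k : ℕ} {T : Submodule ℂ A} (h : ∀ a b, b ∈ zpow mul (k+1) → mul a b ∈ T) :
    zpow mul (k+2) ≤ T := by
  refine Submodule.span_le.2 ?_
  rintro z ⟨a, b, hb, rfl⟩
  exact h a b hb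

def pw (x : A) : ℕ → A
  | 0 => x
  | (k+1) => mul x (pw x k)

lemma pw_mem (x : A) : ∀ k, pw mul x k ∈ zpow mul (k+1)
  | 0 => by trivial
  | (k+1) => mem_zpow_mul mul (pw_mem x k) x

variable (hzin : IsZinbiel mul)
include hzin

lemma pw_mul_aux (x : A) : ∀ s i j : ℕ, i + j ≤ s →
    mul (pw mul x i) (pw mul x j)
      = (((i+j+1).choose (j+1) : ℕ) : ℂ) • pw mul x (i+j+1) := by
  intro s
  induction s with
  | zero =>
    rintro i j h
    obtain ⟨rfl, rfl⟩ : i = 0 ∧ j = 0 := by omega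
    show mul x (pw mul x 0) = _
    simp [pw]
  | succ s ih =>
    intro i j hs
    match i with
    | 0 =>
      show mul x (pw mul x j) = _
      rw [show (0+j+1).choose (j+1) = 1 by simp]
      show pw mul x (j+1) = _
      rw [show (0:ℕ)+j+1 = j+1 by omega]
      simp
    | (i+1) =>
      rcases Nat.lt_or_ge (i + j) (s+1) with hij | hij
      swap
      · omega
      have e : mul (mul x (pw mul x i)) (pw mul x j)
          = mul x (mul (pw mul x i) (pw mul x j)) + mul x (mul (pw mul x j) (pw mul x i)) :=
        hzin x _ _
      show mul (mul x (pw mul x i)) (pw mul x j) = _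
      rw [e, ih i j (by omega), ih j i (by omega), map_smul, map_smul]
      have h1 : mul x (pw mul x (i+j+1)) = pw mul x (i+j+2) := rfl
      have h2 : mul x (pw mul x (j+i+1)) = pw mul x (i+j+2) := by
        rw [show j+i+1 = i+j+1 by omega]; rfl
      rw [h1, h2, ← add_smul, show i+1+j+1 = i+j+2 by omega]
      congr 1
      push_cast [show i+1+j+1 = (i+j+1)+1 by omega, show j+i+1 = i+j+1 by omega]
      rw [show (i+j+1+1).choose (j+1) = (i+j+1).choose j + (i+j+1).choose (j+1) from
        Nat.choose_succ_succ (i+j+1) j]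
      have hsymm : (i+j+1).choose (i+1) = (i+j+1).choose j := by
        rw [← Nat.choose_symm (by omega : i+1 ≤ i+j+1)]
        congr 1
        omega
      push_cast [hsymm]
      ring

lemma pw_mul (x : A) (i j : ℕ) :
    mul (pw mul x i) (pw mul x j)
      = (((i+j+1).choose (j+1) : ℕ) : ℂ) • pw mul x (i+j+1) :=
  pw_mul_aux mul hzin x (i+j) i j le_rfl

end Pw

section Dim
open Module
variable {A : Type*} [AddCommGroup A] [Module ℂ A] [FiniteDimensional ℂ A]
variable (mul : A →ₗ[ℂ] A →ₗ[ℂ] A) {n : ℕ}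
variable (hfil : ∀ i : ℕ, 2 ≤ i → i ≤ n → Module.finrank ℂ (zpow mul i) = n - i)
include hfil

lemma zp_not_le {k : ℕ} (h2 : 2 ≤ k) (hk : k+1 ≤ n) : ¬ zpow mul k ≤ zpow mul (k+1) := by
  intro h
  have h1 := hfil k h2 (by omega)
  have h2' := hfil (k+1) (by omega) hk
  have := Submodule.finrank_mono h
  omega

lemma zp_bot (h2 : 2 ≤ n) : zpow mul n = ⊥ := by
  have := hfil n h2 le_rfl
  simp only [Nat.sub_self] at this
  exact Submodule.finrank_eq_zero.1 this

lemma zp_bot' (h2 : 2 ≤ n) {k : ℕ} (hk : n ≤ k) : zpow mul k = ⊥ :=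
  le_bot_iff.1 (le_trans (zp_le_of_le mul hk) (le_of_eq (zp_bot mul hfil h2)))

lemma zp_codim {k : ℕ} (h2 : 2 ≤ k) (hk : k+1 ≤ n) {v : A}
    (hv : v ∈ zpow mul k) (hv' : v ∉ zpow mul (k+1)) :
    zpow mul k ≤ (ℂ ∙ v) ⊔ zpow mul (k+1) := by
  set W := (ℂ ∙ v) ⊔ zpow mul (k+1) with hW
  have hle : W ≤ zpow mul k := by
    refine sup_le ?_ (zp_succ_le mul k)
    rw [Submodule.span_singleton_le_iff_mem]; exact hv
  have hlt : zpow mul (k+1) < W := by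
    refine lt_of_le_of_ne le_sup_right ?_
    intro h
    exact hv' (h ▸ (le_sup_left : (ℂ ∙ v) ≤ W) (Submodule.mem_span_singleton_self v))
  have h1 : finrank ℂ (zpow mul (k+1)) < finrank ℂ W := Submodule.finrank_lt_finrank_of_lt hlt
  have h2' := hfil k h2 (by omega)
  have h3 := hfil (k+1) (by omega) hk
  have := Submodule.finrank_mono hle
  have : W = zpow mul k := Submodule.eq_of_le_of_finrank_le hle (by omega)
  rw [this]

end Dim

section Exists
open Module
variable {A : Type*} [AddCommGroup A] [Module ℂ A] [FiniteDimensional ℂ A]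
variable (mul : A →ₗ[ℂ] A →ₗ[ℂ] A) {n : ℕ}

lemma exists_good (hzin : IsZinbiel mul) (hn : 5 ≤ n) (hdim : Module.finrank ℂ A = n)
    (hfil : ∀ i : ℕ, 2 ≤ i → i ≤ n → Module.finrank ℂ (zpow mul i) = n - i) :
    ∃ x : A, mul x x ∉ zpow mul 3 := by
  by_contra hexists
  push_neg at hexists
  have hQ : ∀ x : A, mul x x ∈ zpow mul 3 := hexists
  have hpol : ∀ a b : A, mul a b + mul b a ∈ zpow mul 3 := by
    intro a b
    have h := hQ (a + b)
    simp only [map_add, LinearMap.add_apply] at h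
    have := Submodule.sub_mem _ (Submodule.sub_mem _ h (hQ a)) (hQ b)
    convert this using 1
    abel
  have hL1 : ∀ u ∈ zpow mul 2, ∀ c : A, mul u c ∈ zpow mul 4 := by
    intro u hu
    refine Submodule.span_induction (p := fun z _ => ∀ c : A, mul z c ∈ zpow mul 4)
      ?_ (by simp) ?_ ?_ hu
    · rintro z ⟨a, b, -, rfl⟩ c
      have e := hzin a b c
      have : mul a (mul b c) + mul a (mul c b) = mul a (mul b c + mul c b) := by
        rw [map_add]
      rw [e, this]
      exact mem_zpow_mul mul (hpol b c) a
    · intro u v _ _ hu hv c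
      simp only [map_add, LinearMap.add_apply]
      exact Submodule.add_mem _ (hu c) (hv c)
    · intro r u _ hu c
      simp only [map_smul, LinearMap.smul_apply]
      exact Submodule.smul_mem _ r (hu c)
  -- pick x ∉ A², y ∉ ℂx ⊔ A²
  have h2n : finrank ℂ (zpow mul 2) = n - 2 := hfil 2 le_rfl (by omega)
  have hA : finrank ℂ (⊤ : Submodule ℂ A) = n := by rw [finrank_top, hdim]
  have hne : zpow mul 2 < ⊤ := by
    refine lt_of_le_of_ne le_top ?_
    intro h; rw [h] at h2n; omega
  obtain ⟨x, -, hx2⟩ := SetLike.exists_of_lt hne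
  have hxne : x ≠ 0 := fun h => hx2 (h ▸ Submodule.zero_mem _)
  set W : Submodule ℂ A := (ℂ ∙ x) ⊔ zpow mul 2 with hWdef
  have hWlt : W < ⊤ := by
    refine lt_of_le_of_ne le_top ?_
    intro h
    have h1 : finrank ℂ W ≤ 1 + (n-2) := by
      calc finrank ℂ W ≤ finrank ℂ (ℂ ∙ x) + finrank ℂ (zpow mul 2) :=
            Submodule.finrank_add_le_finrank_add_finrank _ _
        _ ≤ 1 + (n-2) := by rw [finrank_span_singleton hxne, h2n]
    rw [h] at h1; rw [hA] at h1; omega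
  obtain ⟨y, -, hyW⟩ := SetLike.exists_of_lt hWlt
  have hdecomp : ∀ a : A, ∃ c₁ c₂ : ℂ, ∃ a₂ ∈ zpow mul 2, a = c₁ • x + c₂ • y + a₂ := by
    have hW' : (ℂ ∙ y) ⊔ W = ⊤ := by
      have l1 : zpow mul 2 < W := by
        refine lt_of_le_of_ne le_sup_right ?_
        intro h
        exact hx2 (h ▸ (le_sup_left : (ℂ ∙ x) ≤ W) (Submodule.mem_span_singleton_self x))
      have l2 : W < (ℂ ∙ y) ⊔ W := by
        refine lt_of_le_of_ne le_sup_right ?_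
        intro h
        exact hyW (h ▸ (le_sup_left : (ℂ ∙ y) ≤ _) (Submodule.mem_span_singleton_self y))
      have f1 : n - 2 < finrank ℂ W := h2n ▸ Submodule.finrank_lt_finrank_of_lt l1
      have f2 : finrank ℂ W < finrank ℂ ((ℂ ∙ y) ⊔ W : Submodule ℂ A) :=
        Submodule.finrank_lt_finrank_of_lt l2
      have f3 : finrank ℂ ((ℂ ∙ y) ⊔ W : Submodule ℂ A) ≤ n := hdim ▸ Submodule.finrank_le _
      exact Submodule.eq_top_of_finrank_eq (by omega)
    intro a
    have : a ∈ (ℂ ∙ y) ⊔ W := hW'.symm ▸ Submodule.mem_top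
    obtain ⟨u1, hu1, u2, hu2, h12⟩ := Submodule.mem_sup.1 this
    obtain ⟨u3, hu3, a₂, ha₂, h34⟩ := Submodule.mem_sup.1 hu2
    obtain ⟨c₂, rfl⟩ := Submodule.mem_span_singleton.1 hu1
    obtain ⟨c₁, rfl⟩ := Submodule.mem_span_singleton.1 hu3
    exact ⟨c₁, c₂, a₂, ha₂, by rw [← h12, ← h34]; abel⟩
  set u : A := mul x y with hu_def
  have hu2 : u ∈ zpow mul 2 := mul_mem_zpow_two mul x y
  have hyx3 : mul y x + u ∈ zpow mul 3 := by
    have := hpol y x; rwa [show mul y x + mul x y = mul y x + u from rfl] at this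
  have hu3 : u ∉ zpow mul 3 := by
    intro hu
    refine zp_not_le mul hfil (k := 2) le_rfl (by omega) ?_
    refine zp_span_le mul ?_
    rintro a b -
    have hyx : mul y x ∈ zpow mul 3 := by
      have := Submodule.sub_mem _ hyx3 hu
      simpa using this
    have hax : ∀ c : A, mul c x ∈ zpow mul 3 ∧ mul c y ∈ zpow mul 3 := by
      intro c
      obtain ⟨c₁, c₂, a₂, ha₂, rfl⟩ := hdecomp c
      have hmem4 : ∀ d : A, mul a₂ d ∈ zpow mul 3 :=
        fun d => zp_le_of_le mul (by omega) (hL1 a₂ ha₂ d)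
      constructor <;>
      · simp only [map_add, map_smul, LinearMap.add_apply, LinearMap.smul_apply]
        refine Submodule.add_mem _ (Submodule.add_mem _ (Submodule.smul_mem _ _ ?_)
          (Submodule.smul_mem _ _ ?_)) (hmem4 _)
        · first | exact hQ x | exact hu
        · first | exact hyx | exact hQ y
    obtain ⟨d₁, d₂, b₂, hb₂, hb⟩ := hdecomp b
    rw [hb, map_add, map_add, map_smul, map_smul]
    exact Submodule.add_mem _ (Submodule.add_mem _ (Submodule.smul_mem _ _ (hax a).1)
      (Submodule.smul_mem _ _ (hax a).2)) (mem_zpow_mul mul hb₂ a)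
  have hA2 : zpow mul 2 ≤ (ℂ ∙ u) ⊔ zpow mul 3 := zp_codim mul hfil le_rfl (by omega) hu2 hu3
  have hxu_or : mul x u ∉ zpow mul 4 ∨ mul y u ∉ zpow mul 4 := by
    by_contra h
    push_neg at h
    obtain ⟨h1, h2⟩ := h
    refine zp_not_le mul hfil (k := 3) (by omega) (by omega) ?_
    refine zp_span_le mul ?_
    rintro a b hb
    obtain ⟨c, hc, w, hw, rfl⟩ := Submodule.mem_sup.1 (hA2 hb)
    obtain ⟨c', rfl⟩ := Submodule.mem_span_singleton.1 hc
    rw [map_add, map_smul]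
    refine Submodule.add_mem _ (Submodule.smul_mem _ _ ?_) (mem_zpow_mul mul hw a)
    obtain ⟨c₁, c₂, a₂, ha₂, rfl⟩ := hdecomp a
    simp only [map_add, map_smul, LinearMap.add_apply, LinearMap.smul_apply]
    exact Submodule.add_mem _ (Submodule.add_mem _ (Submodule.smul_mem _ _ h1)
      (Submodule.smul_mem _ _ h2)) (hL1 a₂ ha₂ u)
  have final : ∀ v : A, v ∈ zpow mul 3 → v ∉ zpow mul 4 →
      mul x v ∈ zpow mul 5 → mul y v ∈ zpow mul 5 → False := by
    intro v hv3 hv4 hxv hyv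
    refine zp_not_le mul hfil (k := 4) (by omega) (by omega) ?_
    refine zp_span_le mul ?_
    rintro a b hb
    have hA3 : zpow mul 3 ≤ (ℂ ∙ v) ⊔ zpow mul 4 :=
      zp_codim mul hfil (by omega) (by omega) hv3 hv4
    obtain ⟨c, hc, w, hw, rfl⟩ := Submodule.mem_sup.1 (hA3 hb)
    obtain ⟨c', rfl⟩ := Submodule.mem_span_singleton.1 hc
    rw [map_add, map_smul]
    refine Submodule.add_mem _ (Submodule.smul_mem _ _ ?_) (mem_zpow_mul mul hw a)
    obtain ⟨c₁, c₂, a₂, ha₂, rfl⟩ := hdecomp a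
    simp only [map_add, map_smul, LinearMap.add_apply, LinearMap.smul_apply]
    refine Submodule.add_mem _ (Submodule.add_mem _ (Submodule.smul_mem _ _ hxv)
      (Submodule.smul_mem _ _ hyv)) ?_
    have := mul_mem_zpow mul hzin (i := 2) (j := 3) (by omega) (by omega) ha₂ hv3
    simpa using this
  have hux4 : mul u x ∈ zpow mul 4 := hL1 u hu2 x
  have huy4 : mul u y ∈ zpow mul 4 := hL1 u hu2 y
  have case1 : ∀ hxu : mul x u ∉ zpow mul 4, False := by
    intro hxu
    set v : A := mul x u with hv_def
    have hv3 : v ∈ zpow mul 3 := mem_zpow_mul mul hu2 x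
    have hxv : mul x v ∈ zpow mul 5 := by
      have e := hzin x x u
      have t1 : mul (mul x x) u ∈ zpow mul 5 := by
        have := mul_mem_zpow mul hzin (i := 3) (j := 2) (by omega) (by omega) (hQ x) hu2
        simpa using this
      have t2 : mul x (mul u x) ∈ zpow mul 5 := mem_zpow_mul mul hux4 x
      have heq : mul x v = mul (mul x x) u - mul x (mul u x) := by
        rw [e]; abel
      rw [heq]; exact Submodule.sub_mem _ t1 t2
    have hyv : mul y v ∈ zpow mul 5 := by
      obtain ⟨c, hc, w, hw, hyw⟩ := Submodule.mem_sup.1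
        ((zp_codim mul hfil (k := 3) (by omega) (by omega) hv3 hxu)
          (mem_zpow_mul mul hu2 y))
      obtain ⟨c', rfl⟩ := Submodule.mem_span_singleton.1 hc
      have huu : mul u u ∈ zpow mul 5 := by
        have e := hzin x y u
        have t1 : mul x (mul y u) ∈ zpow mul 5 := by
          rw [← hyw, map_add, map_smul]
          exact Submodule.add_mem _ (Submodule.smul_mem _ _ hxv) (mem_zpow_mul mul hw x)
        have t2 : mul x (mul u y) ∈ zpow mul 5 := mem_zpow_mul mul huy4 x
        rw [show mul u u = mul (mul x y) u from rfl, e]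
        exact Submodule.add_mem _ t1 t2
      have hyxu : mul (mul y x) u ∈ zpow mul 5 := by
        have heq : mul (mul y x) u = mul (mul y x + u) u - mul u u := by
          rw [map_add, LinearMap.add_apply]; abel
        rw [heq]
        refine Submodule.sub_mem _ ?_ huu
        have := mul_mem_zpow mul hzin (i := 3) (j := 2) (by omega) (by omega) hyx3 hu2
        simpa using this
      have e := hzin y x u
      have heq : mul y v = mul (mul y x) u - mul y (mul u x) := by rw [e]; abel
      rw [heq]
      exact Submodule.sub_mem _ hyxu (mem_zpow_mul mul hux4 y)
    exact final v hv3 hxu hxv hyv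
  by_cases hxu : mul x u ∈ zpow mul 4
  · have hyu : mul y u ∉ zpow mul 4 := by
      rcases hxu_or with h | h
      · exact absurd hxu h
      · exact h
    set v : A := mul y u with hv_def
    have hv3 : v ∈ zpow mul 3 := mem_zpow_mul mul hu2 y
    have hyv : mul y v ∈ zpow mul 5 := by
      have e := hzin y y u
      have t1 : mul (mul y y) u ∈ zpow mul 5 := by
        have := mul_mem_zpow mul hzin (i := 3) (j := 2) (by omega) (by omega) (hQ y) hu2
        simpa using this
      have t2 : mul y (mul u y) ∈ zpow mul 5 := mem_zpow_mul mul huy4 y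
      have heq : mul y v = mul (mul y y) u - mul y (mul u y) := by rw [e]; abel
      rw [heq]; exact Submodule.sub_mem _ t1 t2
    have hyxu : mul (mul y x) u ∈ zpow mul 5 := by
      have e := hzin y x u
      rw [e]
      exact Submodule.add_mem _ (mem_zpow_mul mul hxu y) (mem_zpow_mul mul hux4 y)
    have huu : mul u u ∈ zpow mul 5 := by
      have heq : mul u u = mul (mul y x + u) u - mul (mul y x) u := by
        rw [map_add, LinearMap.add_apply]; abel
      rw [heq]
      refine Submodule.sub_mem _ ?_ hyxu
      have := mul_mem_zpow mul hzin (i := 3) (j := 2) (by omega) (by omega) hyx3 hu2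
      simpa using this
    have hxv : mul x v ∈ zpow mul 5 := by
      have e := hzin x y u
      have heq : mul x v = mul (mul x y) u - mul x (mul u y) := by rw [e]; abel
      rw [heq]
      exact Submodule.sub_mem _ huu (mem_zpow_mul mul huy4 x)
    exact final v hv3 hyu hxv hyv
  · exact case1 hxu

end Exists

section Chain
open Module
variable {A : Type*} [AddCommGroup A] [Module ℂ A] [FiniteDimensional ℂ A]
variable (mul : A →ₗ[ℂ] A →ₗ[ℂ] A) {n : ℕ}

lemma pw_not_mem (hzin : IsZinbiel mul) (hn : 5 ≤ n)
    (hfil : ∀ i : ℕ, 2 ≤ i → i ≤ n → Module.finrank ℂ (zpow mul i) = n - i)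
    (x : A) (hx1 : x ∉ zpow mul 2) (hx2 : mul x x ∉ zpow mul 3) :
    ∀ k, k ≤ n - 2 → pw mul x k ∉ zpow mul (k+2) := by
  intro k
  induction k with
  | zero => intro _; exact hx1
  | succ k ih =>
    intro hk
    match k, ih with
    | 0, _ => exact hx2
    | (m+1), ih =>
      set k := m + 1
      have hkprev : pw mul x k ∉ zpow mul (k+2) := ih (by omega)
      intro hcon
      refine zp_not_le mul hfil (k := k+2) (by omega) (by omega) ?_
      have hstep : zpow mul (k+2) ≤ zpow mul (k+3) := by
        refine zp_span_le mul ?_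
        intro a b hb
        have hcod : zpow mul (k+1) ≤ (ℂ ∙ pw mul x k) ⊔ zpow mul (k+2) :=
          zp_codim mul hfil (by omega) (by omega) (pw_mem mul x k) hkprev
        obtain ⟨c, hc, w, hw, rfl⟩ := Submodule.mem_sup.1 (hcod hb)
        obtain ⟨c', rfl⟩ := Submodule.mem_span_singleton.1 hc
        rw [map_add, map_smul]
        refine Submodule.add_mem _ (Submodule.smul_mem _ _ ?_) (mem_zpow_mul mul hw a)
        -- mul a (pw k) ∈ zpow (k+3)
        have e := hzin a x (pw mul x m)
        have hpm : mul (pw mul x m) x = (((m+1) : ℕ) : ℂ) • pw mul x (m+1) := by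
          have := pw_mul mul hzin x m 0
          simpa [show pw mul x 0 = x from rfl] using this
        have hxp : mul x (pw mul x m) = pw mul x (m+1) := rfl
        have e2 : mul (mul a x) (pw mul x m)
            = (((m+2) : ℕ) : ℂ) • mul a (pw mul x k) := by
          rw [e, hxp, hpm, map_smul]
          show mul a (pw mul x k) + _ • mul a (pw mul x k) = _
          rw [show ((m+2:ℕ):ℂ) = 1 + ((m+1:ℕ):ℂ) by push_cast; ring, add_smul, one_smul]
        have hax2 : mul a x ∈ zpow mul 2 := mul_mem_zpow_two mul a x
        have hpw1 : pw mul x 1 ∈ zpow mul 2 := pw_mem mul x 1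
        have hpw1' : pw mul x 1 ∉ zpow mul 3 := hx2
        obtain ⟨c1, hc1, w', hw', haxeq⟩ := Submodule.mem_sup.1
          ((zp_codim mul hfil (k := 2) le_rfl (by omega) hpw1 hpw1') hax2)
        obtain ⟨c1', rfl⟩ := Submodule.mem_span_singleton.1 hc1
        have t1 : mul (pw mul x 1) (pw mul x m) ∈ zpow mul (k+3) := by
          rw [pw_mul mul hzin x 1 m]
          refine Submodule.smul_mem _ _ ?_
          have : (1+m+1) = k + 1 := by omega
          rw [this]
          exact hcon
        have t2 : mul w' (pw mul x m) ∈ zpow mul (k+3) := by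
          have := mul_mem_zpow mul hzin (i := 3) (j := m+1) (by omega) (by omega) hw'
            (pw_mem mul x m)
          rwa [show 3 + (m+1) = k+3 by omega] at this
        have t3 : mul (mul a x) (pw mul x m) ∈ zpow mul (k+3) := by
          rw [← haxeq, map_add, map_smul, LinearMap.add_apply, LinearMap.smul_apply]
          exact Submodule.add_mem _ (Submodule.smul_mem _ _ t1) t2
        rw [e2] at t3
        have hne : (((m+2):ℕ) : ℂ) ≠ 0 := Nat.cast_ne_zero.2 (by omega)
        have := Submodule.smul_mem _ (((m+2):ℕ) : ℂ)⁻¹ t3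
        rwa [inv_smul_smul₀ hne] at this
      exact hstep

end Chain

section Indep
open Module
variable {A : Type*} [AddCommGroup A] [Module ℂ A] [FiniteDimensional ℂ A]
variable (mul : A →ₗ[ℂ] A →ₗ[ℂ] A) {n : ℕ}
variable (hzin : IsZinbiel mul) (hn : 5 ≤ n)
variable (hfil : ∀ i : ℕ, 2 ≤ i → i ≤ n → Module.finrank ℂ (zpow mul i) = n - i)
variable {x : A} (hx1 : x ∉ zpow mul 2) (hx2 : mul x x ∉ zpow mul 3)
include hzin hn hfil hx1 hx2

lemma pw_sum_zero :
    ∀ t m : ℕ, m + t = n - 1 → ∀ g : ℕ → ℂ,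
      (∑ k ∈ Finset.Ico m (n-1), g k • pw mul x k) = 0 →
      ∀ k ∈ Finset.Ico m (n-1), g k = 0 := by
  intro t
  induction t with
  | zero =>
    intro m hm g _ k hk
    rw [Finset.mem_Ico] at hk
    omega
  | succ t ih =>
    intro m hm g hsum k hk
    have hmlt : m < n - 1 := by omega
    rw [Finset.sum_eq_sum_Ico_succ_bot hmlt] at hsum
    have htail : ∀ j ∈ Finset.Ico (m+1) (n-1), g j • pw mul x j ∈ zpow mul (m+2) := by
      intro j hj
      rw [Finset.mem_Ico] at hj
      exact Submodule.smul_mem _ _ (zp_le_of_le mul (by omega) (pw_mem mul x j))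
    have htailmem : (∑ j ∈ Finset.Ico (m+1) (n-1), g j • pw mul x j) ∈ zpow mul (m+2) :=
      Submodule.sum_mem _ htail
    have hgm : g m = 0 := by
      by_contra hgm
      have hmem : g m • pw mul x m ∈ zpow mul (m+2) := by
        have : g m • pw mul x m = -(∑ j ∈ Finset.Ico (m+1) (n-1), g j • pw mul x j) := by
          rw [eq_neg_iff_add_eq_zero]; exact hsum
        rw [this]; exact Submodule.neg_mem _ htailmem
      have := Submodule.smul_mem _ (g m)⁻¹ hmem
      rw [inv_smul_smul₀ hgm] at this
      exact pw_not_mem mul hzin hn hfil x hx1 hx2 m (by omega) this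
    rw [Finset.mem_Ico] at hk
    rcases Nat.eq_or_lt_of_le hk.1 with h | h
    · subst h; exact hgm
    · have htail0 : (∑ j ∈ Finset.Ico (m+1) (n-1), g j • pw mul x j) = 0 := by
        rw [hgm, zero_smul, zero_add] at hsum; exact hsum
      exact ih (m+1) (by omega) g htail0 k (Finset.mem_Ico.2 ⟨h, hk.2⟩)


omit hzin hn hfil hx1 hx2 in
lemma pw_zero (hn' : 2 ≤ n)
    (hfil' : ∀ i : ℕ, 2 ≤ i → i ≤ n → Module.finrank ℂ (zpow mul i) = n - i)
    {m : ℕ} (hm : n - 1 ≤ m) : pw mul x m = 0 := by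
  have h1 : pw mul x m ∈ zpow mul (m+1) := pw_mem mul x m
  rw [zp_bot' mul hfil' hn' (by omega)] at h1
  simpa using h1

lemma pw_shift_zero (t : ℕ) (ht1 : 1 ≤ t) (ht2 : t ≤ n - 1) (f : Fin (n-2) → ℂ)
    (hsum : (∑ k : Fin (n-2), f k • pw mul x ((k:ℕ)+t)) = 0) :
    ∀ k : Fin (n-2), (k:ℕ) + t ≤ n - 2 → f k = 0 := by
  set F : ℕ → ℂ := fun j => if h : j - t < n - 2 ∧ t ≤ j then f ⟨j - t, h.1⟩ else 0 with hF
  have hFval : ∀ k : Fin (n-2), F ((k:ℕ)+t) = f k := by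
    intro k
    have hk : ((k:ℕ)+t) - t < n - 2 ∧ t ≤ (k:ℕ)+t := ⟨by simpa using k.2, by omega⟩
    show (if h : ((k:ℕ)+t) - t < n - 2 ∧ t ≤ (k:ℕ)+t then f ⟨((k:ℕ)+t) - t, h.1⟩ else 0) = f k
    rw [dif_pos hk]
    congr 1
    exact Fin.ext (by simp)
  have key : (∑ j ∈ Finset.Ico t (n-1), F j • pw mul x j) = 0 := by
    have e1 : (∑ j ∈ Finset.Ico t (n-2+t), F j • pw mul x j)
        = ∑ i ∈ Finset.range (n-2), F (t+i) • pw mul x (t+i) := by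
      rw [Finset.sum_Ico_eq_sum_range, show n-2+t-t = n-2 from by omega]
    have e2 : (∑ i ∈ Finset.range (n-2), F (t+i) • pw mul x (t+i))
        = ∑ k : Fin (n-2), f k • pw mul x ((k:ℕ)+t) := by
      rw [← Fin.sum_univ_eq_sum_range (fun i => F (t+i) • pw mul x (t+i)) (n-2)]
      refine Finset.sum_congr rfl (fun k _ => ?_)
      rw [show t + (k:ℕ) = (k:ℕ) + t by omega, hFval k]
    have e3 : (∑ j ∈ Finset.Ico t (n-1), F j • pw mul x j)
        = ∑ j ∈ Finset.Ico t (n-2+t), F j • pw mul x j := by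
      refine Finset.sum_subset ?_ ?_
      · exact Finset.Ico_subset_Ico le_rfl (by omega)
      · intro j hj hj'
        rw [Finset.mem_Ico] at hj hj'
        have : n - 1 ≤ j := by omega
        rw [pw_zero mul (by omega) hfil this, smul_zero]
    rw [e3, e1, e2, hsum]
  intro k hk
  have := pw_sum_zero mul hzin hn hfil hx1 hx2 (n-1-t) t (by omega) F key
    ((k:ℕ)+t) (Finset.mem_Ico.2 ⟨by omega, by omega⟩)
  rwa [hFval k] at this

lemma fam_indep (z : A) (hz : z ∉ (ℂ ∙ x) ⊔ zpow mul 2) :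
    LinearIndependent ℂ (fun i : Fin n => if (i:ℕ) = n-1 then z else pw mul x (i:ℕ)) := by
  set v : Fin n → A := fun i => if (i:ℕ) = n-1 then z else pw mul x (i:ℕ) with hv
  rw [Fintype.linearIndependent_iff]
  intro g hsum
  set i0 : Fin n := ⟨n-1, by omega⟩ with hi0
  have hvi0 : v i0 = z := by simp [hv, hi0]
  have hWmem : ∀ i : Fin n, i ≠ i0 → v i ∈ (ℂ ∙ x) ⊔ zpow mul 2 := by
    intro i hi
    have hne : (i:ℕ) ≠ n-1 := fun h => hi (Fin.ext (by simp [h, hi0]))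
    have : v i = pw mul x (i:ℕ) := by simp [hv, if_neg hne]
    rw [this]
    match hc : (i:ℕ) with
    | 0 => exact Submodule.mem_sup_left (Submodule.mem_span_singleton_self x)
    | (k+1) => exact Submodule.mem_sup_right (zp_le_of_le mul (by omega) (pw_mem mul x (k+1)))
  have hglast : g i0 = 0 := by
    by_contra hg
    have hsplit : (∑ i ∈ Finset.univ.erase i0, g i • v i) + g i0 • v i0 = 0 := by
      rw [Finset.sum_erase_add _ _ (Finset.mem_univ i0)]
      exact hsum
    have hmem : g i0 • z ∈ (ℂ ∙ x) ⊔ zpow mul 2 := by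
      have : g i0 • z = -(∑ i ∈ Finset.univ.erase i0, g i • v i) := by
        rw [eq_neg_iff_add_eq_zero, add_comm, ← hvi0]
        exact hsplit
      rw [this]
      refine Submodule.neg_mem _ (Submodule.sum_mem _ fun i hi => ?_)
      exact Submodule.smul_mem _ _ (hWmem i (Finset.ne_of_mem_erase hi))
    have := Submodule.smul_mem _ (g i0)⁻¹ hmem
    rw [inv_smul_smul₀ hg] at this
    exact hz this
  -- now pure pw sum
  have hpwsum : (∑ i : Fin n, g i • pw mul x (i:ℕ)) = 0 := by
    have : ∀ i : Fin n, g i • pw mul x (i:ℕ) = g i • v i := by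
      intro i
      by_cases hi : i = i0
      · subst hi
        rw [hvi0, hglast, zero_smul, zero_smul]
      · have hne : (i:ℕ) ≠ n-1 := fun h => hi (Fin.ext (by simp [h, hi0]))
        simp [hv, if_neg hne]
    rw [Finset.sum_congr rfl (fun i _ => this i)]
    exact hsum
  set G : ℕ → ℂ := fun j => if h : j < n then g ⟨j, h⟩ else 0 with hG
  have hGsum : (∑ j ∈ Finset.Ico 0 (n-1), G j • pw mul x j) = 0 := by
    have h1 : (∑ j ∈ Finset.range n, G j • pw mul x j) = 0 := by
      rw [← Fin.sum_univ_eq_sum_range (fun j => G j • pw mul x j) n]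
      rw [← hpwsum]
      refine Finset.sum_congr rfl (fun i _ => ?_)
      have : G (i:ℕ) = g i := by
        show (if h : (i:ℕ) < n then g ⟨(i:ℕ), h⟩ else 0) = g i
        rw [dif_pos i.2]
      rw [this]
    rw [← Finset.range_eq_Ico]
    have h2 : (∑ j ∈ Finset.range n, G j • pw mul x j)
        = (∑ j ∈ Finset.range (n-1), G j • pw mul x j) + G (n-1) • pw mul x (n-1) := by
      rw [show n = (n-1)+1 by omega, Finset.sum_range_succ]
      congr 2 <;> omega
    rw [h2, pw_zero mul (by omega) hfil (le_refl (n-1)), smul_zero, add_zero] at h1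
    exact h1
  have hGzero := pw_sum_zero mul hzin hn hfil hx1 hx2 (n-1) 0 (by omega) G hGsum
  intro i
  by_cases hi : i = i0
  · subst hi; exact hglast
  · have hne : (i:ℕ) ≠ n-1 := fun h => hi (Fin.ext (by simp [h, hi0]))
    have hlt : (i:ℕ) < n - 1 := by have := i.2; omega
    have := hGzero (i:ℕ) (Finset.mem_Ico.2 ⟨by omega, hlt⟩)
    show g i = 0
    rw [← this]
    show _ = (if h : (i:ℕ) < n then g ⟨(i:ℕ), h⟩ else 0)
    rw [dif_pos i.2]

end Indep


open Module in
set_option maxHeartbeats 1000000 in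
/-- For `n ≥ 5`, every `n`-dimensional complex filiform Zinbiel algebra
has an adapted basis `e_1, …, e_n` with `e_i ∘ e_j = C(i+j-1, j) e_{i+j}` for
`2 ≤ i+j ≤ n-1`, `e_n ∘ e_1 = α e_{n-1}`, `e_n ∘ e_n = β e_{n-1}`,
all other products of basis vectors being zero. -/
theorem filiform_adapted_basis (n : ℕ) (hn : 5 ≤ n)
    (A : Type*) [AddCommGroup A] [Module ℂ A] [FiniteDimensional ℂ A]
    (mul : A →ₗ[ℂ] A →ₗ[ℂ] A) (hzin : IsZinbiel mul)
    (hdim : Module.finrank ℂ A = n)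
    (hfil : ∀ i : ℕ, 2 ≤ i → i ≤ n → Module.finrank ℂ (zpow mul i) = n - i) :
    ∃ (e : Basis (Fin n) ℂ A) (α β : ℂ),
      (∀ i j : Fin n, ∀ h : (i : ℕ) + j + 2 ≤ n - 1,
        mul (e i) (e j) =
          ((((i : ℕ) + j + 1).choose ((j : ℕ) + 1) : ℕ) : ℂ) •
            e ⟨(i : ℕ) + j + 1, by omega⟩) ∧
      mul (e ⟨n - 1, by omega⟩) (e ⟨0, by omega⟩) = α • e ⟨n - 2, by omega⟩ ∧
      mul (e ⟨n - 1, by omega⟩) (e ⟨n - 1, by omega⟩) = β • e ⟨n - 2, by omega⟩ ∧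
      (∀ i j : Fin n, ¬ ((i : ℕ) + j + 2 ≤ n - 1) →
        ¬ ((i : ℕ) = n - 1 ∧ (j : ℕ) = 0) → ¬ ((i : ℕ) = n - 1 ∧ (j : ℕ) = n - 1) →
        mul (e i) (e j) = 0) := by
  obtain ⟨x, hx2⟩ := exists_good mul hzin hn hdim hfil
  have hx1 : x ∉ zpow mul 2 := fun h => hx2 (mem_zpow_mul mul h x)
  have hxne : x ≠ 0 := fun h => hx1 (h ▸ Submodule.zero_mem _)
  have h2n : finrank ℂ (zpow mul 2) = n - 2 := hfil 2 le_rfl (by omega)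
  have hP0 : ∀ m : ℕ, n-1 ≤ m → pw mul x m = 0 := fun m hm => pw_zero mul (by omega) hfil hm
  -- pick z₀ outside W
  set W : Submodule ℂ A := (ℂ ∙ x) ⊔ zpow mul 2 with hW
  have hWlt : W < ⊤ := by
    refine lt_of_le_of_ne le_top ?_
    intro h
    have h1 : finrank ℂ W ≤ 1 + (n-2) := by
      calc finrank ℂ W ≤ finrank ℂ (ℂ ∙ x) + finrank ℂ (zpow mul 2) :=
            Submodule.finrank_add_le_finrank_add_finrank _ _
        _ ≤ 1 + (n-2) := by rw [finrank_span_singleton hxne, h2n]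
    have h2 : finrank ℂ W = n := by rw [h, finrank_top, hdim]
    omega
  obtain ⟨z₀, -, hz₀⟩ := SetLike.exists_of_lt hWlt
  -- A² is spanned by pw 1, ..., pw (n-2)
  set w : Fin (n-2) → A := fun k => pw mul x ((k:ℕ)+1) with hw
  have hwind : LinearIndependent ℂ w := by
    rw [Fintype.linearIndependent_iff]
    intro f hf k
    refine pw_shift_zero mul hzin hn hfil hx1 hx2 1 le_rfl (by omega) f hf k ?_
    have := k.2; omega
  have hspan : zpow mul 2 = Submodule.span ℂ (Set.range w) := by
    refine (Submodule.eq_of_le_of_finrank_le ?_ ?_).symm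
    · rw [Submodule.span_le]
      rintro - ⟨k, rfl⟩
      exact zp_le_of_le mul (by omega) (pw_mem mul x ((k:ℕ)+1))
    · rw [h2n, finrank_span_eq_card hwind]
      simp
  -- correction z := z₀ - c with mul x z = 0
  have hxz₀ : mul x z₀ ∈ zpow mul 2 := mul_mem_zpow_two mul x z₀
  obtain ⟨d, hd⟩ := (Submodule.mem_span_range_iff_exists_fun ℂ).1 (hspan ▸ hxz₀)
  set c : A := ∑ k : Fin (n-2), d k • pw mul x (k:ℕ) with hc
  set z : A := z₀ - c with hzdef
  have hxz : mul x z = 0 := by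
    rw [hzdef, map_sub, hc, map_sum]
    rw [show (∑ k : Fin (n-2), mul x (d k • pw mul x (k:ℕ))) = mul x z₀ from ?_, sub_self]
    rw [← hd]
    refine Finset.sum_congr rfl (fun k _ => ?_)
    rw [map_smul]
    rfl
  have hzW : z ∉ W := by
    intro hmem
    refine hz₀ ?_
    have hcW : c ∈ W := by
      refine Submodule.sum_mem _ (fun k _ => Submodule.smul_mem _ _ ?_)
      match hk : (k:ℕ) with
      | 0 => exact Submodule.mem_sup_left (Submodule.mem_span_singleton_self x)
      | (m+1) => exact Submodule.mem_sup_right (zp_le_of_le mul (by omega) (pw_mem mul x (m+1)))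
    have : z₀ = z + c := by rw [hzdef]; abel
    rw [this]
    exact Submodule.add_mem _ hmem hcW
  -- basis
  set v : Fin n → A := fun i => if (i:ℕ) = n-1 then z else pw mul x (i:ℕ) with hv
  have hind : LinearIndependent ℂ v := fam_indep mul hzin hn hfil hx1 hx2 z hzW
  have hcard : Fintype.card (Fin n) = finrank ℂ A := by simp [hdim]
  haveI : Nonempty (Fin n) := ⟨⟨0, by omega⟩⟩
  refine ⟨basisOfLinearIndependentOfCardEqFinrank hind hcard, ?_⟩
  have he : ∀ i, basisOfLinearIndependentOfCardEqFinrank hind hcard i = v i := by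
    intro i
    rw [coe_basisOfLinearIndependentOfCardEqFinrank]
  set e := basisOfLinearIndependentOfCardEqFinrank hind hcard with hedef
  -- α
  have hzx2 : mul z x ∈ zpow mul 2 := mul_mem_zpow_two mul z x
  obtain ⟨f, hf⟩ := (Submodule.mem_span_range_iff_exists_fun ℂ).1 (hspan ▸ hzx2)
  have hkill : mul x (mul z x) = 0 := by
    have e1 := hzin x z x
    rw [hxz] at e1
    simp only [map_zero, LinearMap.zero_apply] at e1
    have : (0 : A) = mul x (mul z x) + 0 := e1
    simpa using this.symm
  have hfzero : ∀ k : Fin (n-2), (k:ℕ) ≤ n-4 → f k = 0 := by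
    have hsum2 : (∑ k : Fin (n-2), f k • pw mul x ((k:ℕ)+2)) = 0 := by
      rw [← hkill, ← hf, map_sum]
      refine Finset.sum_congr rfl (fun k _ => ?_)
      rw [map_smul]
      rfl
    intro k hk
    exact pw_shift_zero mul hzin hn hfil hx1 hx2 2 (by omega) (by omega) f hsum2 k (by omega)
  set ln3 : Fin (n-2) := ⟨n-3, by omega⟩ with hln3
  have hzx : mul z x = f ln3 • pw mul x (n-2) := by
    rw [← hf, Finset.sum_eq_single ln3]
    · congr 1
      show pw mul x (n-3+1) = pw mul x (n-2)
      congr 1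
      omega
    · intro k _ hk
      have : (k:ℕ) ≤ n-4 := by
        have h1 := k.2
        have h2 : (k:ℕ) ≠ n-3 := fun h => hk (Fin.ext (by rw [hln3, h]))
        omega
      rw [hfzero k this, zero_smul]
    · intro h
      exact absurd (Finset.mem_univ ln3) h
  -- z ∘ pw (m+1) = 0
  have hzP : ∀ m : ℕ, mul z (pw mul x (m+1)) = 0 := by
    intro m
    have e1 := hzin z x (pw mul x m)
    have hL : mul (mul z x) (pw mul x m) = 0 := by
      rw [hzx, map_smul, LinearMap.smul_apply, pw_mul mul hzin x (n-2) m,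
        hP0 (n-2+m+1) (by omega), smul_zero, smul_zero]
    have hpmx : mul (pw mul x m) x = (((m+1 : ℕ)) : ℂ) • pw mul x (m+1) := by
      have := pw_mul mul hzin x m 0
      simpa [show pw mul x 0 = x from rfl] using this
    have hxpm : mul x (pw mul x m) = pw mul x (m+1) := rfl
    rw [hL, hxpm, hpmx, map_smul] at e1
    have e2 : (0 : A) = ((((m+2):ℕ)) : ℂ) • mul z (pw mul x (m+1)) := by
      rw [e1, show ((m+2:ℕ):ℂ) = 1 + ((m+1:ℕ):ℂ) by push_cast; ring, add_smul, one_smul]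
    have hne : (((m+2):ℕ) : ℂ) ≠ 0 := Nat.cast_ne_zero.2 (by omega)
    exact (smul_eq_zero.1 e2.symm).resolve_left hne
  -- pw j ∘ z = 0
  have hPz : ∀ j : ℕ, mul (pw mul x j) z = 0 := by
    intro j
    match j with
    | 0 => exact hxz
    | (m+1) =>
      have e1 := hzin (pw mul x m) x z
      have hR : mul (pw mul x m) (mul x z) + mul (pw mul x m) (mul z x) = 0 := by
        rw [hxz, map_zero, zero_add, hzx, map_smul, pw_mul mul hzin x m (n-2),
          hP0 (m+(n-2)+1) (by omega), smul_zero, smul_zero]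
      have hpmx : mul (pw mul x m) x = (((m+1 : ℕ)) : ℂ) • pw mul x (m+1) := by
        have := pw_mul mul hzin x m 0
        simpa [show pw mul x 0 = x from rfl] using this
      rw [hpmx, map_smul, LinearMap.smul_apply, hR] at e1
      have hne : (((m+1):ℕ) : ℂ) ≠ 0 := Nat.cast_ne_zero.2 (by omega)
      exact (smul_eq_zero.1 e1).resolve_left hne
  -- β
  have hzz2 : mul z z ∈ zpow mul 2 := mul_mem_zpow_two mul z z
  obtain ⟨g, hg⟩ := (Submodule.mem_span_range_iff_exists_fun ℂ).1 (hspan ▸ hzz2)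
  have hkill2 : mul (mul z z) x = 0 := by
    have e1 := hzin z z x
    have h1 : mul z (mul z x) = 0 := by
      rw [hzx, map_smul]
      rw [show (n-2) = (n-3)+1 by omega, hzP (n-3), smul_zero]
    have h2 : mul z (mul x z) = 0 := by rw [hxz, map_zero]
    rw [e1, h1, h2, add_zero]
  have hgzero : ∀ k : Fin (n-2), (k:ℕ) ≤ n-4 → g k = 0 := by
    have hsum3 : (∑ k : Fin (n-2), (g k * (((k:ℕ)+2 : ℕ) : ℂ)) • pw mul x ((k:ℕ)+2)) = 0 := by
      rw [← hkill2, ← hg]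
      rw [map_sum, LinearMap.sum_apply]
      refine Finset.sum_congr rfl (fun k _ => ?_)
      rw [map_smul, LinearMap.smul_apply]
      have : mul (w k) x = ((((k:ℕ)+2 : ℕ)) : ℂ) • pw mul x ((k:ℕ)+2) := by
        have h5 := pw_mul mul hzin x ((k:ℕ)+1) 0
        rw [show (k:ℕ)+1+0+1 = (k:ℕ)+2 from by omega, Nat.choose_one_right] at h5
        exact h5
      rw [this, smul_smul]
    intro k hk
    have := pw_shift_zero mul hzin hn hfil hx1 hx2 2 (by omega) (by omega)
      (fun k => g k * (((k:ℕ)+2 : ℕ) : ℂ)) hsum3 k (by omega)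
    have hne : ((((k:ℕ)+2 : ℕ)) : ℂ) ≠ 0 := Nat.cast_ne_zero.2 (by omega)
    exact (mul_eq_zero.1 this).resolve_right hne
  have hzz : mul z z = g ln3 • pw mul x (n-2) := by
    rw [← hg, Finset.sum_eq_single ln3]
    · congr 1
      show pw mul x (n-3+1) = pw mul x (n-2)
      congr 1
      omega
    · intro k _ hk
      have : (k:ℕ) ≤ n-4 := by
        have h1 := k.2
        have h2 : (k:ℕ) ≠ n-3 := fun h => hk (Fin.ext (by rw [hln3, h]))
        omega
      rw [hgzero k this, zero_smul]
    · intro h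
      exact absurd (Finset.mem_univ ln3) h
  -- finish
  have hvlast : v ⟨n-1, by omega⟩ = z := by
    show (if (n-1:ℕ) = n-1 then z else pw mul x (n-1)) = z
    rw [if_pos rfl]
  have hv0 : v ⟨0, by omega⟩ = x := by
    rw [hv]
    show (if (0:ℕ) = n-1 then z else pw mul x 0) = x
    rw [if_neg (by omega : ¬ (0:ℕ) = n-1)]
    rfl
  have hvn2 : v ⟨n-2, by omega⟩ = pw mul x (n-2) := by
    rw [hv]
    show (if (n-2:ℕ) = n-1 then z else pw mul x (n-2)) = _
    rw [if_neg (by omega)]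
  refine ⟨f ln3, g ln3, ?_, ?_, ?_, ?_⟩
  · intro i j hij
    have hi : (i:ℕ) ≠ n-1 := by omega
    have hj : (j:ℕ) ≠ n-1 := by omega
    have hij1 : ((⟨(i:ℕ)+(j:ℕ)+1, by omega⟩ : Fin n) : ℕ) ≠ n-1 := by
      show (i:ℕ)+(j:ℕ)+1 ≠ n-1
      omega
    rw [he i, he j, he ⟨(i:ℕ)+(j:ℕ)+1, by omega⟩, hv]
    simp only
    rw [if_neg hi, if_neg hj, if_neg hij1]
    exact pw_mul mul hzin x i j
  · simp only [he, hvlast, hv0, hvn2]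
    exact hzx
  · simp only [he, hvlast, hvn2]
    exact hzz
  · intro i j h1 h2 h3
    rw [he i, he j, hv]
    simp only
    by_cases hi : (i:ℕ) = n-1
    · by_cases hj : (j:ℕ) = n-1
      · exact absurd ⟨hi, hj⟩ h3
      · have hj0 : (j:ℕ) ≠ 0 := fun h => h2 ⟨hi, h⟩
        obtain ⟨m, hm⟩ : ∃ m, (j:ℕ) = m+1 := ⟨(j:ℕ)-1, by omega⟩
        rw [if_pos hi, if_neg hj, hm]
        exact hzP m
    · by_cases hj : (j:ℕ) = n-1
      · rw [if_neg hi, if_pos hj]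
        exact hPz i
      · rw [if_neg hi, if_neg hj, pw_mul mul hzin x i j,
          hP0 ((i:ℕ)+(j:ℕ)+1) (by omega), smul_zero]
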